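/- arXiv:2408.00492 — 2 statements merged into one kernel-verified Lean document; each statement's English description precedes it below -/
import Mathlib

section
/- Let a, γ ∈ ℝ³, n ∈ ℝ³ a unit vector, c > 0, and suppose |n · (a − γ)| ≤ c|a − γ|². Let τ > 0 satisfy τ ≤ 1/(6c) and let s ∈ [0, τ]. Then |a − s·n − γ|² ≥ (|a − γ|² + s²)/4. -/
open scoped RealInnerProductSpace

/-- Lower bound for the distance from a normally shifted point `a − s·n` to a point `γ`
on a surface satisfying the second-order normal estimate `|n·(a−γ)| ≤ c|a−γ|²`. -/
theorem stmt_3 (a γ n : EuclideanSpace ℝ (Fin 3)) (hn : ‖n‖ = 1) (c : ℝ) (hc : 0 < c)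
    (hest : |⟪n, a - γ⟫| ≤ c * ‖a - γ‖ ^ 2) (τ : ℝ) (hτ : 0 < τ) (hτc : τ ≤ 1 / (6 * c))
    (s : ℝ) (hs : s ∈ Set.Icc 0 τ) :
    ‖a - s • n - γ‖ ^ 2 ≥ (‖a - γ‖ ^ 2 + s ^ 2) / 4 := by
  obtain ⟨hs0, hsτ⟩ := hs
  have hre : a - s • n - γ = (a - γ) - s • n := by abel
  have key : ‖a - s • n - γ‖ ^ 2 = ‖a - γ‖ ^ 2 - 2 * s * ⟪n, a - γ⟫ + s ^ 2 := by
    rw [hre, norm_sub_sq_real, real_inner_smul_right, norm_smul, real_inner_comm]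
    simp [hn, abs_of_nonneg hs0]
    ring
  have hp : ⟪n, a - γ⟫ ≤ c * ‖a - γ‖ ^ 2 := (abs_le.mp hest).2
  have hsc : s * c ≤ 1 / 6 := by
    have h1 : s ≤ 1 / (6 * c) := hsτ.trans hτc
    rw [le_div_iff₀ (by positivity)] at h1
    nlinarith
  rw [key]
  nlinarith [sq_nonneg s, sq_nonneg (‖a - γ‖), mul_nonneg hs0 hc.le,
    mul_le_mul_of_nonneg_right hp (mul_nonneg (by norm_num : (0:ℝ) ≤ 2) hs0),
    mul_le_mul_of_nonneg_right hsc (sq_nonneg ‖a - γ‖)]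
end

section
/- Let a, b ∈ ℝ³, let n_a, n_b ∈ ℝ³ be unit vectors, c > 0 and δ > 0. Assume: (i) |n_a · (b − a)| ≤ c|a − b|² and |n_b · (b − a)| ≤ c|a − b|²; (ii) if |a − b| < δ then n_a · n_b ≥ 1/2; (iii) τ > 0 satisfies τ ≤ min{δ/3, 1/(6c)}. Then for all s, t ∈ [0, τ]: |a − s·n_a − (b + t·n_b)|² ≥ (|a − b|² + t²)/6. -/
open scoped RealInnerProductSpace

/-- Lower bound for the mutual distance of the two normal closing segments attached
to points `a`, `b` of a closed `C²` surface with outward unit normals `n_a`, `n_b`. -/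
theorem stmt_4 (a b na nb : EuclideanSpace ℝ (Fin 3)) (hna : ‖na‖ = 1) (hnb : ‖nb‖ = 1)
    (c δ : ℝ) (hc : 0 < c) (hδ : 0 < δ)
    (h1a : |⟪na, b - a⟫| ≤ c * ‖a - b‖ ^ 2) (h1b : |⟪nb, b - a⟫| ≤ c * ‖a - b‖ ^ 2)
    (h2 : ‖a - b‖ < δ → ⟪na, nb⟫ ≥ 1 / 2)
    (τ : ℝ) (hτ : 0 < τ) (hτc : τ ≤ min (δ / 3) (1 / (6 * c)))
    (s t : ℝ) (hs : s ∈ Set.Icc 0 τ) (ht : t ∈ Set.Icc 0 τ) :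
    ‖a - s • na - (b + t • nb)‖ ^ 2 ≥ (‖a - b‖ ^ 2 + t ^ 2) / 6 := by
  obtain ⟨hs0, hsτ⟩ := hs
  obtain ⟨ht0, htτ⟩ := ht
  have hτδ : τ ≤ δ / 3 := hτc.trans (min_le_left _ _)
  have hτc' : τ ≤ 1 / (6 * c) := hτc.trans (min_le_right _ _)
  have h6c : 6 * c * τ ≤ 1 := by
    rw [le_div_iff₀ (by positivity)] at hτc'
    linarith
  have hr0 : (0:ℝ) ≤ ‖a - b‖ := norm_nonneg _
  have hflip : ∀ v : EuclideanSpace ℝ (Fin 3), ⟪v, a - b⟫ = -⟪v, b - a⟫ := by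
    intro v; rw [← inner_neg_right, neg_sub]
  have hA : |⟪na, a - b⟫| ≤ c * ‖a - b‖ ^ 2 := by rw [hflip, abs_neg]; exact h1a
  have hB : |⟪nb, a - b⟫| ≤ c * ‖a - b‖ ^ 2 := by rw [hflip, abs_neg]; exact h1b
  have hC : |⟪na, nb⟫| ≤ 1 := by
    have := abs_real_inner_le_norm na nb
    rwa [hna, hnb, one_mul] at this
  have hna2 : ⟪na, na⟫ = 1 := by rw [real_inner_self_eq_norm_sq, hna]; norm_num
  have hnb2 : ⟪nb, nb⟫ = 1 := by rw [real_inner_self_eq_norm_sq, hnb]; norm_num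
  have key : ‖a - s • na - (b + t • nb)‖ ^ 2 =
      ‖a - b‖ ^ 2 + s ^ 2 + t ^ 2 - 2 * s * ⟪na, a - b⟫ - 2 * t * ⟪nb, a - b⟫
        + 2 * (s * t) * ⟪na, nb⟫ := by
    have hv : a - s • na - (b + t • nb) = (a - b) - s • na - t • nb := by module
    rw [hv, ← real_inner_self_eq_norm_sq, ← real_inner_self_eq_norm_sq]
    simp only [inner_sub_left, inner_sub_right, real_inner_smul_left, real_inner_smul_right,
      hna2, hnb2]
    rw [real_inner_comm a na, real_inner_comm b na, real_inner_comm a nb,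
      real_inner_comm b nb, real_inner_comm nb na]
    ring
  rw [key]
  set r : ℝ := ‖a - b‖ with hrdef
  set A : ℝ := ⟪na, a - b⟫ with hAdef
  set B : ℝ := ⟪nb, a - b⟫ with hBdef
  set C : ℝ := ⟪na, nb⟫ with hCdef
  clear_value r A B C
  clear key hflip h1a h1b hna2 hnb2 hrdef hAdef hBdef hCdef
  have hτcr : τ * (c * r ^ 2) ≤ r ^ 2 / 6 := by
    have h := mul_nonneg (by linarith : (0:ℝ) ≤ 1 - 6 * c * τ) (sq_nonneg r)
    nlinarith
  have habs : ∀ x X : ℝ, 0 ≤ x → x ≤ τ → |X| ≤ c * r ^ 2 →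
      x * X ≤ r ^ 2 / 6 ∧ -(r ^ 2 / 6) ≤ x * X := by
    intro x X hx0 hxτ hX
    have h1 : x * |X| ≤ τ * (c * r ^ 2) :=
      mul_le_mul hxτ hX (abs_nonneg _) hτ.le
    constructor
    · calc x * X ≤ x * |X| := mul_le_mul_of_nonneg_left (le_abs_self X) hx0
        _ ≤ τ * (c * r ^ 2) := h1
        _ ≤ r ^ 2 / 6 := hτcr
    · have h2 : x * (-X) ≤ r ^ 2 / 6 := by
        calc x * (-X) ≤ x * |X| := mul_le_mul_of_nonneg_left (neg_le_abs X) hx0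
          _ ≤ τ * (c * r ^ 2) := h1
          _ ≤ r ^ 2 / 6 := hτcr
      nlinarith
  obtain ⟨hsA, hsA'⟩ := habs s A hs0 hsτ hA
  obtain ⟨htB, htB'⟩ := habs t B ht0 htτ hB
  by_cases hrδ : r < δ
  · -- close case: normals nearly parallel, cross term nonnegative
    have hC' : C ≥ 1 / 2 := h2 hrδ
    have hst : 0 ≤ s * t * C :=
      mul_nonneg (mul_nonneg hs0 ht0) (by linarith)
    linarith [sq_nonneg s, sq_nonneg t, sq_nonneg r]
  · -- far case: |a - b| ≥ δ, so s, t ≤ r / 3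
    push_neg at hrδ
    have hsr : s ≤ r / 3 := by linarith
    have htr : t ≤ r / 3 := by linarith
    have hstC : -(s * t) ≤ s * t * C := by
      obtain ⟨hC1, _⟩ := abs_le.mp hC
      nlinarith [mul_nonneg hs0 ht0]
    nlinarith [sq_nonneg (r - 2 * t), mul_nonneg (sub_nonneg.mpr hsr) ht0, sq_nonneg s]
end
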